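/- Let μ ≥ 0 and η > η̄. Then L_{η,μ}((β,γ),(β̃,γ̃)) is level bounded in (β,γ) locally uniformly in (β̃,γ̃): for every (β̄,γ̄) ∈ ℝ^p × ℝ^q and every ρ ∈ ℝ there exist ε > 0 and a bounded set B ⊆ ℝ^p × ℝ^q such that {(β,γ) : L_{η,μ}((β,γ),(β̃,γ̃)) ≤ ρ} ⊆ B for every (β̃,γ̃) with ‖(β̃,γ̃) − (β̄,γ̄)‖ ≤ ε. -/

import Mathlib

open Matrix Real Filter Topology Bornology
open scoped Pointwise

noncomputable section

abbrev Vec (k : ℕ) : Type := Fin k → ℝ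

/-- Euclidean norm of a vector. -/
def eNorm {ι : Type*} [Fintype ι] (x : ι → ℝ) : ℝ := Real.sqrt (∑ j, (x j) ^ 2)

/-- Squared Euclidean norm of a pair of vectors. -/
def sqnorm2 {p q : ℕ} (w : Vec p × Vec q) : ℝ :=
  (∑ j, (w.1 j) ^ 2) + ∑ j, (w.2 j) ^ 2

/-- ℓ²→ℓ² operator norm of a matrix (its largest singular value). -/
def opNorm {ι κ : Type*} [Fintype ι] [Fintype κ] (M : Matrix ι κ ℝ) : ℝ :=
  sInf {c : ℝ | 0 ≤ c ∧ ∀ x : κ → ℝ, eNorm (M.mulVec x) ≤ c * eNorm x}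

/-- Smallest eigenvalue of a symmetric matrix, via Rayleigh quotients. -/
def minEig {ι : Type*} [Fintype ι] (M : Matrix ι ι ℝ) : ℝ :=
  sInf {r : ℝ | ∃ x : ι → ℝ, eNorm x = 1 ∧ r = x ⬝ᵥ M.mulVec x}

/-- Largest eigenvalue of a symmetric matrix, via Rayleigh quotients. -/
def maxEig {ι : Type*} [Fintype ι] (M : Matrix ι ι ℝ) : ℝ :=
  sSup {r : ℝ | ∃ x : ι → ℝ, eNorm x = 1 ∧ r = x ⬝ᵥ M.mulVec x}

/-- The log-barrier (perspective of the negative log). -/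
def phiBar (μ : ℝ) {q : ℕ} (γ : Vec q) : EReal :=
  if μ = 0 then (if ∀ j, 0 ≤ γ j then (0 : EReal) else ⊤)
  else if 0 < μ then
    (if ∀ j, 0 < γ j then (((-μ) * ∑ j, Real.log (γ j / μ) : ℝ) : EReal) else ⊤)
  else ⊤

/-- The coupling function κ_η. -/
def kappaFun (η : ℝ) {p q : ℕ} (w : Vec p × Vec q) : ℝ := η / 2 * sqnorm2 w

/-- 1-coercivity: liminf of F(w)/‖w‖ as ‖w‖ → ∞ is positive. -/
def OneCoercive {p q : ℕ} (R : Vec p × Vec q → EReal) : Prop :=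
  ∃ c : ℝ, 0 < c ∧ ∃ r : ℝ, ∀ w : Vec p × Vec q,
    r ≤ Real.sqrt (sqnorm2 w) → ((c * Real.sqrt (sqnorm2 w) : ℝ) : EReal) ≤ R w

/-- Data of a linear mixed-effects model. -/
structure LMEData (m p q : ℕ) where
  n : Fin m → ℕ
  X : ∀ i, Matrix (Fin (n i)) (Fin p) ℝ
  Z : ∀ i, Matrix (Fin (n i)) (Fin q) ℝ
  y : ∀ i, Fin (n i) → ℝ
  lam : ∀ i, Matrix (Fin (n i)) (Fin (n i)) ℝ

namespace LMEData

variable {m p q : ℕ}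

/-- Ω_i(Γ) = Z_i Γ Z_iᵀ + Λ_i. -/
def Omega (D : LMEData m p q) (Γ : Matrix (Fin q) (Fin q) ℝ) (i : Fin m) :
    Matrix (Fin (D.n i)) (Fin (D.n i)) ℝ :=
  D.Z i * Γ * (D.Z i)ᵀ + D.lam i

/-- The marginal negative log-likelihood L_ML(β, Γ). -/
def LML (D : LMEData m p q) (β : Vec p) (Γ : Matrix (Fin q) (Fin q) ℝ) : ℝ :=
  ∑ i, ((1 : ℝ) / 2 * ((D.y i - D.X i *ᵥ β) ⬝ᵥ ((D.Omega Γ i)⁻¹ *ᵥ (D.y i - D.X i *ᵥ β)))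
    + (1 : ℝ) / 2 * Real.log (D.Omega Γ i).det)

/-- L(β, γ) = L_ML(β, Diag γ). -/
def L (D : LMEData m p q) (β : Vec p) (γ : Vec q) : ℝ := D.LML β (Matrix.diagonal γ)

/-- ν = max_i (1/2) μ_min(Λ_i)^{-2} σ_max(Z_i)^4. -/
def nu (D : LMEData m p q) : ℝ :=
  ⨆ i : Fin m, (1 : ℝ) / 2 * ((minEig (D.lam i)) ^ 2)⁻¹ * (opNorm (D.Z i)) ^ 4

/-- η̄ = ν m. -/
def etabar (D : LMEData m p q) : ℝ := D.nu * m

/-- L_{η,μ}((β,γ),(β̃,γ̃)) = L(β,γ) + φ_μ(γ) + κ_η(β−β̃,γ−γ̃). -/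
def Lrelax (D : LMEData m p q) (η μ : ℝ) (x w : Vec p × Vec q) : EReal :=
  ((D.L x.1 x.2 + kappaFun η (x - w) : ℝ) : EReal) + phiBar μ x.2

/-- The optimal value function u_{η,μ} (with extended-real values). -/
def uval (D : LMEData m p q) (η μ : ℝ) (w : Vec p × Vec q) : EReal :=
  ⨅ x : Vec p × Vec q, D.Lrelax η μ x w

/-- The (real-valued) optimal value function u_{η,μ}. -/
def ufun (D : LMEData m p q) (η μ : ℝ) (w : Vec p × Vec q) : ℝ := (D.uval η μ w).toReal

/-- Partial gradient ∇_β L. -/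
def gradB (D : LMEData m p q) (β : Vec p) (γ : Vec q) : Vec p :=
  fun j => fderiv ℝ (fun b => D.L b γ) β (Pi.single j 1)

/-- Partial gradient ∇_γ L. -/
def gradG (D : LMEData m p q) (β : Vec p) (γ : Vec q) : Vec q :=
  fun j => fderiv ℝ (fun g => D.L β g) γ (Pi.single j 1)

/-- The map G_{η,μ}. -/
def Gmap (D : LMEData m p q) (η μ : ℝ) (x : Vec p × Vec q × Vec q) (w : Vec p × Vec q) :
    Vec p × Vec q × Vec q :=
  (D.gradB x.1 x.2.1 + η • (x.1 - w.1),
   D.gradG x.1 x.2.1 + η • (x.2.1 - w.2) - x.2.2,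
   fun j => x.2.2 j * x.2.1 j - μ)

/-- Second-derivative block ∇²_{ββ} L. -/
def hessBB (D : LMEData m p q) (β : Vec p) (γ : Vec q) : Matrix (Fin p) (Fin p) ℝ :=
  Matrix.of fun j k => fderiv ℝ (fun b => D.gradB b γ j) β (Pi.single k 1)

/-- Second-derivative block ∇²_{γγ} L. -/
def hessGG (D : LMEData m p q) (β : Vec p) (γ : Vec q) : Matrix (Fin q) (Fin q) ℝ :=
  Matrix.of fun j k => fderiv ℝ (fun g => D.gradG β g j) γ (Pi.single k 1)

/-- Second-derivative block ∇²_{γβ} L (the p×q cross block). -/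
def hessGB (D : LMEData m p q) (β : Vec p) (γ : Vec q) : Matrix (Fin p) (Fin q) ℝ :=
  Matrix.of fun j k => fderiv ℝ (fun g => D.gradB β g j) γ (Pi.single k 1)

/-- Second-derivative block ∇²_{βγ} L (the q×p cross block). -/
def hessBG (D : LMEData m p q) (β : Vec p) (γ : Vec q) : Matrix (Fin q) (Fin p) ℝ :=
  Matrix.of fun j k => fderiv ℝ (fun b => D.gradG b γ j) β (Pi.single k 1)

end LMEData

/-- f(r, M) = (1/2)(rᵀM⁻¹r + ln det M). -/
def fRM {n : ℕ} (r : Vec n) (M : Matrix (Fin n) (Fin n) ℝ) : ℝ :=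
  (1 : ℝ) / 2 * (r ⬝ᵥ (M⁻¹ *ᵥ r) + Real.log M.det)

/-! The barrier is bounded below by an affine function of `γ` (from `log t ≤ t - 1`), `L` is
bounded below on the nonnegative orthant (since `det Λ_i ≤ det Ω_i`), and so on a sublevel set
of `L_{η,μ}` the quadratic proximal term `η/2 ‖x - w‖²` is dominated by a term linear in
`‖x - w‖`, uniformly for `w` near `w̄`. -/

theorem Matrix.PosSemidef.one_le_det_one_add {n : Type*} [Fintype n] [DecidableEq n]
    {C : Matrix n n ℝ} (hC : C.PosSemidef) : 1 ≤ (1 + C).det := by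
  have hH : (1 + C).IsHermitian := isHermitian_one.add hC.isHermitian
  rw [hH.det_eq_prod_eigenvalues]
  refine Finset.one_le_prod fun i _ => ?_
  have hi : hH.eigenvalues i ∈ spectrum ℝ (algebraMap ℝ _ 1 + C) := by
    rw [map_one]; exact hH.eigenvalues_mem_spectrum_real i
  obtain ⟨_, rfl, c, hc, heig⟩ := spectrum.singleton_add_eq C (1 : ℝ) ▸ hi
  have hc0 : 0 ≤ c := (posSemidef_iff_isHermitian_and_spectrum_nonneg.mp hC).2 hc
  simp only [RCLike.ofReal_real_eq_id, id_eq, ← heig]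
  exact le_add_of_nonneg_right hc0

open scoped MatrixOrder in
theorem Matrix.PosDef.det_le_det_add {n : Type*} [Fintype n] [DecidableEq n]
    {A B : Matrix n n ℝ} (hA : A.PosDef) (hB : B.PosSemidef) : A.det ≤ (A + B).det := by
  obtain ⟨R, rfl⟩ := CStarAlgebra.nonneg_iff_eq_star_mul_self.mp hB.nonneg
  rw [det_add_mul _ _ (isUnit_iff_ne_zero.mpr hA.det_pos.ne')]
  exact le_mul_of_one_le_right hA.det_pos.le
    (hA.inv.posSemidef.mul_mul_conjTranspose_same R).one_le_det_one_add

theorem le_max_one_of_mul_sq_le {a b c s : ℝ} (ha : 0 < a) (hs : 0 ≤ s)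
    (h : a * s ^ 2 ≤ b * s + c) : s ≤ max 1 ((|b| + |c|) / a) := by
  rcases le_or_gt s 1 with hs1 | hs1
  · exact le_max_of_le_left hs1
  refine le_max_of_le_right ((le_div_iff₀ ha).mpr ?_)
  have hbs : b * s ≤ |b| * s := mul_le_mul_of_nonneg_right (le_abs_self b) hs
  have hcs : c ≤ |c| * s := (le_abs_self c).trans (le_mul_of_one_le_right (abs_nonneg c) hs1.le)
  nlinarith

section Euclidean

variable {p q : ℕ}

def pairToEuclidean : (Vec p × Vec q) ≃L[ℝ] EuclideanSpace ℝ (Fin p ⊕ Fin q) :=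
  (LinearEquiv.sumArrowLequivProdArrow (Fin p) (Fin q) ℝ ℝ).symm.toContinuousLinearEquiv.trans
    (EuclideanSpace.equiv (Fin p ⊕ Fin q) ℝ).symm

theorem norm_pairToEuclidean (w : Vec p × Vec q) :
    ‖pairToEuclidean w‖ = Real.sqrt (sqnorm2 w) := by
  obtain ⟨β, γ⟩ := w
  rw [EuclideanSpace.norm_eq, Fintype.sum_sum_type]
  simp [pairToEuclidean, sqnorm2]

theorem abs_snd_le_norm_pairToEuclidean (w : Vec p × Vec q) (j : Fin q) :
    |w.2 j| ≤ ‖pairToEuclidean w‖ :=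
  PiLp.norm_apply_le (pairToEuclidean w) (Sum.inr j)

theorem sum_snd_le_mul_norm_pairToEuclidean (w : Vec p × Vec q) :
    ∑ j, w.2 j ≤ q * ‖pairToEuclidean w‖ := by
  calc ∑ j, w.2 j ≤ ∑ _j : Fin q, ‖pairToEuclidean w‖ :=
        Finset.sum_le_sum fun j _ => (le_abs_self _).trans (abs_snd_le_norm_pairToEuclidean w j)
    _ = q * ‖pairToEuclidean w‖ := by simp

theorem kappaFun_eq (η : ℝ) (w : Vec p × Vec q) :
    kappaFun η w = η / 2 * ‖pairToEuclidean w‖ ^ 2 := by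
  rw [kappaFun, norm_pairToEuclidean, Real.sq_sqrt]
  unfold sqnorm2
  positivity

end Euclidean

theorem nonneg_of_phiBar_ne_top {μ : ℝ} {q : ℕ} {γ : Vec q} (h : phiBar μ γ ≠ ⊤)
    (j : Fin q) : 0 ≤ γ j := by
  unfold phiBar at h
  split_ifs at h with h0 hγ hpos hγ
  all_goals first | exact hγ j | exact (hγ j).le | exact absurd rfl h

theorem coe_card_mul_sub_sum_le_phiBar {μ : ℝ} (hμ : 0 ≤ μ) {q : ℕ} (γ : Vec q) :
    ((q * μ - ∑ j, γ j : ℝ) : EReal) ≤ phiBar μ γ := by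
  unfold phiBar
  split_ifs with h0 hγ hpos hγ
  · subst h0
    exact EReal.coe_nonpos.mpr (by simpa using Finset.sum_nonneg fun j _ => hγ j)
  · exact le_top
  · refine EReal.coe_le_coe_iff.mpr ?_
    -- termwise `μ - γ_j ≤ -μ log (γ_j / μ)`, i.e. `log t ≤ t - 1` at `t = γ_j / μ`
    have hterm : ∀ j, μ - γ j ≤ -μ * Real.log (γ j / μ) := fun j => by
      have := mul_le_mul_of_nonneg_left (Real.log_le_sub_one_of_pos (div_pos (hγ j) hpos)) hμ
      rw [mul_sub, mul_one, mul_div_cancel₀ _ h0] at this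
      linarith
    calc (q * μ - ∑ j, γ j : ℝ) = ∑ j, (μ - γ j) := by simp [Finset.sum_sub_distrib]
      _ ≤ _ := by rw [Finset.mul_sum]; exact Finset.sum_le_sum fun j _ => hterm j
  · exact le_top
  · exact absurd (lt_of_le_of_ne hμ (Ne.symm h0)) hpos

namespace LMEData

variable {m p q : ℕ} (D : LMEData m p q)

theorem etabar_nonneg : 0 ≤ D.etabar :=
  mul_nonneg (Real.iSup_nonneg fun i => by positivity) (Nat.cast_nonneg m)

theorem sum_half_log_det_lam_le_L (hlam : ∀ i, (D.lam i).PosDef) (β : Vec p) {γ : Vec q}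
    (hγ : ∀ j, 0 ≤ γ j) : ∑ i, (1 : ℝ) / 2 * Real.log (D.lam i).det ≤ D.L β γ := by
  refine Finset.sum_le_sum fun i _ => ?_
  have hZ : (D.Z i * diagonal γ * (D.Z i)ᵀ).PosSemidef :=
    (posSemidef_diagonal_iff.mpr hγ).mul_mul_conjTranspose_same (D.Z i)
  have hΩ : (D.Omega (diagonal γ) i).PosDef := PosDef.posSemidef_add hZ (hlam i)
  have hquad := hΩ.inv.posSemidef.dotProduct_mulVec_nonneg (D.y i - D.X i *ᵥ β)
  have hdet : Real.log (D.lam i).det ≤ Real.log (D.Omega (diagonal γ) i).det :=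
    Real.log_le_log (hlam i).det_pos (by rw [Omega, add_comm]; exact (hlam i).det_le_det_add hZ)
  simp only [star_trivial] at hquad
  linarith

theorem coe_quadratic_minorant_le_Lrelax (hlam : ∀ i, (D.lam i).PosDef) {μ : ℝ}
    (hμ : 0 ≤ μ) (η : ℝ) (x w : Vec p × Vec q) :
    ((∑ i, (1 : ℝ) / 2 * Real.log (D.lam i).det + η / 2 * ‖pairToEuclidean (x - w)‖ ^ 2
      + q * μ - q * ‖pairToEuclidean x‖ : ℝ) : EReal) ≤ D.Lrelax η μ x w := by
  by_cases hφ : phiBar μ x.2 = ⊤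
  · rw [Lrelax, hφ, EReal.coe_add_top]; exact le_top
  have hL := D.sum_half_log_det_lam_le_L hlam x.1 (nonneg_of_phiBar_ne_top hφ)
  have hsum := sum_snd_le_mul_norm_pairToEuclidean x
  calc _ ≤ ((D.L x.1 x.2 + kappaFun η (x - w) : ℝ) : EReal)
          + ((q * μ - ∑ j, x.2 j : ℝ) : EReal) := by
        rw [← EReal.coe_add, EReal.coe_le_coe_iff, kappaFun_eq]
        linarith
    _ ≤ D.Lrelax η μ x w := add_le_add_right (coe_card_mul_sub_sum_le_phiBar hμ x.2) _

end LMEData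

theorem Lrelax_level_bounded_locally_uniformly_general
    {m p q : ℕ}
    (D : LMEData m p q) (hlam : ∀ i, (D.lam i).PosDef)
    (μ η : ℝ) (hμ : 0 ≤ μ) (hη : D.etabar < η)
    (wbar : Vec p × Vec q) (ρ : ℝ) :
    ∃ ε : ℝ, 0 < ε ∧ ∃ B : Set (Vec p × Vec q), Bornology.IsBounded B ∧
      ∀ w : Vec p × Vec q, Real.sqrt (sqnorm2 (w - wbar)) ≤ ε →
        {x : Vec p × Vec q | D.Lrelax η μ x w ≤ (ρ : EReal)} ⊆ B := by
  have hη0 : 0 < η := D.etabar_nonneg.trans_lt hη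
  set e : (Vec p × Vec q) ≃L[ℝ] _ := pairToEuclidean
  set K := ρ - ∑ i, (1 : ℝ) / 2 * Real.log (D.lam i).det - q * μ + q * (‖e wbar‖ + 1)
  set R := max 1 ((|(q : ℝ)| + |K|) / (η / 2))
  refine ⟨1, one_pos, e ⁻¹' Metric.closedBall (e wbar) (R + 1),
    e.antilipschitz.isBounded_preimage Metric.isBounded_closedBall, fun w hw x hx => ?_⟩
  rw [← norm_pairToEuclidean, map_sub] at hw
  have hlevel :=
    EReal.coe_le_coe_iff.mp ((D.coe_quadratic_minorant_le_Lrelax hlam hμ η x w).trans hx)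
  have hxn : ‖e x‖ ≤ ‖e (x - w)‖ + (‖e wbar‖ + 1) := by
    rw [map_sub]
    linarith [norm_le_insert' (e x) (e w), norm_le_insert' (e w) (e wbar)]
  have hR : ‖e (x - w)‖ ≤ R := by
    refine le_max_one_of_mul_sq_le (half_pos hη0) (norm_nonneg _) ?_
    linarith [mul_le_mul_of_nonneg_left hxn (Nat.cast_nonneg (α := ℝ) q)]
  rw [Set.mem_preimage, Metric.mem_closedBall, dist_eq_norm]
  rw [map_sub] at hR
  linarith [norm_sub_le_norm_sub_add_norm_sub (e x) (e w) (e wbar)]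

/-- L_{η,μ} is level bounded in (β,γ) locally uniformly in (β̃,γ̃). -/
theorem Lrelax_level_bounded_locally_uniformly
    {m p q : ℕ} (hm : 0 < m) (hp : 0 < p) (hq : 0 < q)
    (D : LMEData m p q) (hn : ∀ i, 0 < D.n i) (hlam : ∀ i, (D.lam i).PosDef)
    (μ η : ℝ) (hμ : 0 ≤ μ) (hη : D.etabar < η)
    (wbar : Vec p × Vec q) (ρ : ℝ) :
    ∃ ε : ℝ, 0 < ε ∧ ∃ B : Set (Vec p × Vec q), Bornology.IsBounded B ∧
      ∀ w : Vec p × Vec q, Real.sqrt (sqnorm2 (w - wbar)) ≤ ε →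
        {x : Vec p × Vec q | D.Lrelax η μ x w ≤ (ρ : EReal)} ⊆ B :=
  Lrelax_level_bounded_locally_uniformly_general D hlam μ η hμ hη wbar ρ
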